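/- Every nonempty strongly 312-avoiding permutation p of length n decomposes uniquely as a direct sum p = L ⊕ R, where L is a strongly 312-avoiding permutation ending in its smallest entry, and R is a (possibly empty) strongly 312-avoiding permutation. Consequently, the counts Sav_n(312) satisfy Sav_n(312) = Σ_{i=1}^{n} b_i · Sav_{n-i}(312), where b_i is the number of strongly 312-avoiding permutations of length i ending in 1 and Sav_0(312) = 1. -/
import Mathlib


def Avoids312 {n : ℕ} (p : Equiv.Perm (Fin n)) : Prop :=
  ¬ ∃ a b c : Fin n, a < b ∧ b < c ∧ p b < p c ∧ p c < p a

def StronglyAvoids312 {n : ℕ} (p : Equiv.Perm (Fin n)) : Prop :=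
  Avoids312 p ∧ Avoids312 (p * p)

/-- Direct sum of permutations: acts as `p` on the first block, as shifted `q` on the second. -/
def permDirectSum {a b : ℕ} (p : Equiv.Perm (Fin a)) (q : Equiv.Perm (Fin b)) :
    Equiv.Perm (Fin (a + b)) :=
  finSumFinEquiv.symm.trans ((Equiv.sumCongr p q).trans finSumFinEquiv)

/-- `p` ends in its smallest entry. -/
def EndsInOne {m : ℕ} (p : Equiv.Perm (Fin m)) : Prop :=
  ∃ h : 0 < m, (p ⟨m - 1, by omega⟩ : ℕ) = 0

/-- Sav_n(312): the number of strongly 312-avoiding permutations of length n. -/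
noncomputable def Sav312 (n : ℕ) : ℕ := Nat.card {p : Equiv.Perm (Fin n) // StronglyAvoids312 p}

/-- The number of strongly 312-avoiding permutations of length n ending in 1. -/
noncomputable def B312 (n : ℕ) : ℕ :=
  Nat.card {p : Equiv.Perm (Fin n) // StronglyAvoids312 p ∧ EndsInOne p}


set_option maxRecDepth 4000

lemma ds_apply_lt {a b : ℕ} (p : Equiv.Perm (Fin a)) (q : Equiv.Perm (Fin b))
    (x : Fin (a + b)) (h : (x : ℕ) < a) :
    (permDirectSum p q x : ℕ) = p ⟨x, h⟩ := by
  have hx : x = Fin.castAdd b ⟨x, h⟩ := by ext; simp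
  conv_lhs => rw [hx]
  simp only [permDirectSum, Equiv.trans_apply, Equiv.sumCongr_apply,
    finSumFinEquiv_symm_apply_castAdd, Sum.map_inl, finSumFinEquiv_apply_left, Fin.coe_castAdd]

lemma ds_apply_ge {a b : ℕ} (p : Equiv.Perm (Fin a)) (q : Equiv.Perm (Fin b))
    (x : Fin (a + b)) (h : a ≤ (x : ℕ)) :
    (permDirectSum p q x : ℕ) = a + q ⟨(x : ℕ) - a, by omega⟩ := by
  have hx : x = Fin.natAdd a ⟨(x : ℕ) - a, by omega⟩ := by ext; simp; omega
  conv_lhs => rw [hx]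
  simp only [permDirectSum, Equiv.trans_apply, Equiv.sumCongr_apply,
    finSumFinEquiv_symm_apply_natAdd, Sum.map_inr, finSumFinEquiv_apply_right, Fin.coe_natAdd]

lemma ds_mul {a b : ℕ} (p p' : Equiv.Perm (Fin a)) (q q' : Equiv.Perm (Fin b)) :
    permDirectSum p q * permDirectSum p' q' = permDirectSum (p * p') (q * q') := by
  ext x
  simp [permDirectSum, Equiv.Perm.mul_apply]

lemma Avoids312.of_embed {m n : ℕ} {q : Equiv.Perm (Fin n)} (hq : Avoids312 q)
    (L : Equiv.Perm (Fin m)) (f : Fin m → Fin n) (hf : StrictMono f)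
    (hv : ∀ x y, L x < L y ↔ q (f x) < q (f y)) : Avoids312 L := by
  rintro ⟨a, b, c, h1, h2, h3, h4⟩
  exact hq ⟨f a, f b, f c, hf h1, hf h2, (hv _ _).1 h3, (hv _ _).1 h4⟩

lemma avoids_ds {a b : ℕ} {p : Equiv.Perm (Fin a)} {q : Equiv.Perm (Fin b)}
    (hp : Avoids312 p) (hq : Avoids312 q) : Avoids312 (permDirectSum p q) := by
  rintro ⟨x, y, z, h1, h2, h3, h4⟩
  rw [Fin.lt_def] at h1 h2 h3 h4
  by_cases hx : (x : ℕ) < a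
  · have hvy : (permDirectSum p q x : ℕ) = p ⟨x, hx⟩ := ds_apply_lt p q x hx
    have hz : (z : ℕ) < a := by
      by_contra hz
      rw [ds_apply_ge p q z (by omega)] at h4
      omega
    have hy : (y : ℕ) < a := by omega
    rw [ds_apply_lt p q y hy] at h3
    rw [ds_apply_lt p q z hz] at h3 h4
    rw [hvy] at h4
    refine hp ⟨⟨x, hx⟩, ⟨y, hy⟩, ⟨z, hz⟩, ?_, ?_, ?_, ?_⟩ <;>
      (simp only [Fin.lt_def, Fin.val_mk]; omega)
  · have hx' : a ≤ (x : ℕ) := by omega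
    have hy : a ≤ (y : ℕ) := by omega
    have hz : a ≤ (z : ℕ) := by omega
    rw [ds_apply_ge p q x hx'] at h4
    rw [ds_apply_ge p q y hy] at h3
    rw [ds_apply_ge p q z hz] at h3 h4
    refine hq ⟨⟨(x : ℕ) - a, by omega⟩, ⟨(y : ℕ) - a, by omega⟩, ⟨(z : ℕ) - a, by omega⟩,
      ?_, ?_, ?_, ?_⟩ <;> (simp only [Fin.lt_def, Fin.val_mk]; omega)

lemma permCongr_mul {m n : ℕ} (e : Fin m ≃ Fin n) (p q : Equiv.Perm (Fin m)) :
    e.permCongr p * e.permCongr q = e.permCongr (p * q) := by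
  ext x
  simp [Equiv.permCongr_apply, Equiv.Perm.mul_apply]

lemma avoids_permCongr {m n : ℕ} (h : m = n) (q : Equiv.Perm (Fin m)) (hq : Avoids312 q) :
    Avoids312 ((finCongr h).permCongr q) := by
  refine hq.of_embed _ (Fin.cast h.symm) (fun x y hxy => hxy) (fun x y => ?_)
  exact Iff.rfl

lemma blockA {n : ℕ} (p : Equiv.Perm (Fin n)) (hp : Avoids312 p) (b : Fin n)
    (hb : (p b : ℕ) = 0) : ∀ a : Fin n, a ≤ b → (p a : ℕ) ≤ b := by
  intro a ha
  by_contra hgt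
  push_neg at hgt
  have hab : a < b := by
    rcases lt_or_eq_of_le ha with h | h
    · exact h
    · exfalso; rw [h] at hgt; omega
  have hex : ∃ c : Fin n, b < c ∧ 0 < (p c : ℕ) ∧ (p c : ℕ) < (p a : ℕ) := by
    by_contra hno
    push_neg at hno
    have key : ∀ c, b < c → (p a : ℕ) ≤ p c := by
      intro c hc
      have hne : (p c : ℕ) ≠ 0 := by
        intro h0
        have : p c = p b := Fin.ext (by omega)
        exact absurd (p.injective this) (ne_of_gt hc)
      exact hno c hc (Nat.pos_of_ne_zero hne)
    have hsub : ∀ x ∈ insert a (Finset.Ioi b), p x ∈ Finset.Ici (p a) := by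
      intro x hx
      rcases Finset.mem_insert.1 hx with h | h
      · subst h; exact Finset.mem_Ici.2 le_rfl
      · exact Finset.mem_Ici.2 (Fin.le_def.2 (key x (Finset.mem_Ioi.1 h)))
    have hinj : Set.InjOn p (insert a (Finset.Ioi b)) := fun x _ y _ h => p.injective h
    have hinj' : Set.InjOn p ↑(insert a (Finset.Ioi b)) := by
      intro x _ y _ h; exact p.injective h
    have hcard := Finset.card_le_card_of_injOn p hsub hinj'
    rw [Finset.card_insert_of_notMem (by simp [Finset.mem_Ioi]; exact Fin.le_def.1 ha),
      Fin.card_Ioi, Fin.card_Ici] at hcard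
    have h1 := (p a).isLt
    have h2 := b.isLt
    omega
  obtain ⟨c, hc, hc0, hca⟩ := hex
  exact hp ⟨a, b, c, hab, hc, Fin.lt_def.2 (by omega), Fin.lt_def.2 hca⟩

lemma blockB {n : ℕ} (p : Equiv.Perm (Fin n)) (hp : Avoids312 p) (b : Fin n)
    (hb : (p b : ℕ) = 0) : ∀ a : Fin n, b < a → (b : ℕ) < p a := by
  intro a ha
  by_contra hle
  push_neg at hle
  have himg : (Finset.Iic b).image p = Finset.Iic b := by
    apply Finset.eq_of_subset_of_card_le
    · intro x hx
      obtain ⟨y, hy, rfl⟩ := Finset.mem_image.1 hx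
      exact Finset.mem_Iic.2 (Fin.le_def.2 (blockA p hp b hb y (Finset.mem_Iic.1 hy)))
    · rw [Finset.card_image_of_injective _ p.injective]
  have : p a ∈ (Finset.Iic b).image p := by
    rw [himg]; exact Finset.mem_Iic.2 (Fin.le_def.2 hle)
  obtain ⟨y, hy, hya⟩ := Finset.mem_image.1 this
  have : y = a := p.injective hya
  subst this
  exact absurd (Finset.mem_Iic.1 hy) (not_le.2 ha)

def pos1 {n : ℕ} (b : Fin n) (x : Fin ((b : ℕ) + 1)) : Fin n :=
  ⟨(x : ℕ), lt_of_le_of_lt (Nat.lt_succ_iff.mp x.isLt) b.isLt⟩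

def pos2 {n : ℕ} (b : Fin n) (x : Fin (n - ((b : ℕ) + 1))) : Fin n :=
  ⟨(b : ℕ) + 1 + (x : ℕ), by have := x.isLt; omega⟩

noncomputable def leftPerm {n : ℕ} (p : Equiv.Perm (Fin n)) (b : Fin n)
    (hA : ∀ a : Fin n, (a : ℕ) ≤ (b : ℕ) → (p a : ℕ) ≤ (b : ℕ)) :
    Equiv.Perm (Fin ((b : ℕ) + 1)) :=
  Equiv.ofBijective
    (fun x => ⟨(p (pos1 b x) : ℕ), Nat.lt_succ_of_le (hA (pos1 b x) (Nat.lt_succ_iff.mp x.isLt))⟩)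
    (Finite.injective_iff_bijective.mp (fun x y h => by
      simp only [Fin.mk.injEq] at h
      have hxy := congrArg Fin.val (p.injective (Fin.ext h))
      exact Fin.ext (show (x : ℕ) = (y : ℕ) from hxy)))

lemma leftPerm_val {n : ℕ} (p : Equiv.Perm (Fin n)) (b : Fin n)
    (hA : ∀ a : Fin n, (a : ℕ) ≤ (b : ℕ) → (p a : ℕ) ≤ (b : ℕ)) (x : Fin ((b : ℕ) + 1)) :
    (leftPerm p b hA x : ℕ) = (p (pos1 b x) : ℕ) := rfl

noncomputable def rightPerm {n : ℕ} (p : Equiv.Perm (Fin n)) (b : Fin n)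
    (hB : ∀ a : Fin n, (b : ℕ) < (a : ℕ) → (b : ℕ) < (p a : ℕ)) :
    Equiv.Perm (Fin (n - ((b : ℕ) + 1))) :=
  Equiv.ofBijective
    (fun x => ⟨(p (pos2 b x) : ℕ) - ((b : ℕ) + 1), by
      have h1 := hB (pos2 b x) (by show (b : ℕ) < (b : ℕ) + 1 + (x : ℕ); omega)
      have h2 := (p (pos2 b x)).isLt
      have h3 := b.isLt
      omega⟩)
    (Finite.injective_iff_bijective.mp (fun x y h => by
      simp only [Fin.mk.injEq] at h
      have h1 := hB (pos2 b x) (by show (b : ℕ) < (b : ℕ) + 1 + (x : ℕ); omega)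
      have h2 := hB (pos2 b y) (by show (b : ℕ) < (b : ℕ) + 1 + (y : ℕ); omega)
      have h3 : p (pos2 b x) = p (pos2 b y) := Fin.ext (by omega)
      have h4 : ((b : ℕ) + 1 + (x : ℕ)) = ((b : ℕ) + 1 + (y : ℕ)) :=
        congrArg Fin.val (p.injective h3)
      exact Fin.ext (by omega)))

lemma rightPerm_val {n : ℕ} (p : Equiv.Perm (Fin n)) (b : Fin n)
    (hB : ∀ a : Fin n, (b : ℕ) < (a : ℕ) → (b : ℕ) < (p a : ℕ)) (x : Fin (n - ((b : ℕ) + 1))) :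
    (rightPerm p b hB x : ℕ) = (p (pos2 b x) : ℕ) - ((b : ℕ) + 1) := rfl

lemma reconstruct {n : ℕ} (p : Equiv.Perm (Fin n)) (b : Fin n)
    (hA : ∀ a : Fin n, (a : ℕ) ≤ (b : ℕ) → (p a : ℕ) ≤ (b : ℕ))
    (hB : ∀ a : Fin n, (b : ℕ) < (a : ℕ) → (b : ℕ) < (p a : ℕ))
    (h : ((b : ℕ) + 1) + (n - ((b : ℕ) + 1)) = n) :
    (finCongr h).permCongr (permDirectSum (leftPerm p b hA) (rightPerm p b hB)) = p := by
  apply Equiv.ext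
  intro x
  apply Fin.ext
  rw [Equiv.permCongr_apply]
  have e1 : (((finCongr h) (permDirectSum (leftPerm p b hA) (rightPerm p b hB)
      ((finCongr h).symm x))) : ℕ)
      = ((permDirectSum (leftPerm p b hA) (rightPerm p b hB) ((finCongr h).symm x)) : ℕ) := rfl
  rw [e1]
  have hyv : (((finCongr h).symm x : Fin (((b : ℕ) + 1) + (n - ((b : ℕ) + 1)))) : ℕ) = (x : ℕ) :=
    rfl
  by_cases hx : (x : ℕ) < (b : ℕ) + 1
  · rw [ds_apply_lt _ _ _ (show (((finCongr h).symm x : Fin _) : ℕ) < (b : ℕ) + 1 by omega)]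
    rw [leftPerm_val]
    have hgen : ∀ z : Fin n, (z : ℕ) = (x : ℕ) → (p z : ℕ) = (p x : ℕ) := by
      intro z hz
      rw [Fin.ext hz]
    exact hgen _ (show (((finCongr h).symm x : Fin _) : ℕ) = (x : ℕ) from hyv)
  · rw [ds_apply_ge _ _ _ (show (b : ℕ) + 1 ≤ (((finCongr h).symm x : Fin _) : ℕ) by omega)]
    rw [rightPerm_val]
    have hgen : ∀ z : Fin n, (z : ℕ) = (x : ℕ) →
        (b : ℕ) + 1 + ((p z : ℕ) - ((b : ℕ) + 1)) = (p x : ℕ) := by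
      intro z hz
      rw [Fin.ext hz]
      have hpx := hB x (by omega)
      omega
    exact hgen _ (show (b : ℕ) + 1 + ((((finCongr h).symm x : Fin _) : ℕ) - ((b : ℕ) + 1))
      = (x : ℕ) by omega)


lemma SA_left {n : ℕ} (p : Equiv.Perm (Fin n)) (hp : StronglyAvoids312 p) (b : Fin n)
    (hA : ∀ a : Fin n, (a : ℕ) ≤ (b : ℕ) → (p a : ℕ) ≤ (b : ℕ)) :
    StronglyAvoids312 (leftPerm p b hA) := by
  have key : ∀ x, ((leftPerm p b hA * leftPerm p b hA) x : ℕ) = ((p * p) (pos1 b x) : ℕ) := by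
    intro x
    show (leftPerm p b hA (leftPerm p b hA x) : ℕ) = _
    rw [leftPerm_val]
    have e : pos1 b (leftPerm p b hA x) = p (pos1 b x) := Fin.ext (leftPerm_val p b hA x)
    rw [e, Equiv.Perm.mul_apply]
  constructor
  · refine hp.1.of_embed _ (pos1 b) (fun x y hxy => hxy) (fun x y => ?_)
    rw [Fin.lt_def, Fin.lt_def, leftPerm_val, leftPerm_val]
  · refine hp.2.of_embed _ (pos1 b) (fun x y hxy => hxy) (fun x y => ?_)
    rw [Fin.lt_def, Fin.lt_def, key, key]

lemma SA_right {n : ℕ} (p : Equiv.Perm (Fin n)) (hp : StronglyAvoids312 p) (b : Fin n)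
    (hB : ∀ a : Fin n, (b : ℕ) < (a : ℕ) → (b : ℕ) < (p a : ℕ)) :
    StronglyAvoids312 (rightPerm p b hB) := by
  have hmono : StrictMono (pos2 b) := by
    intro x y hxy
    have hxy' : (x : ℕ) < (y : ℕ) := hxy
    show (b : ℕ) + 1 + (x : ℕ) < (b : ℕ) + 1 + (y : ℕ)
    omega
  have hb2 : ∀ x : Fin (n - ((b : ℕ) + 1)), (b : ℕ) < (p (pos2 b x) : ℕ) := fun x =>
    hB (pos2 b x) (by show (b : ℕ) < (b : ℕ) + 1 + (x : ℕ); omega)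
  have key : ∀ x, ((rightPerm p b hB * rightPerm p b hB) x : ℕ)
      = ((p * p) (pos2 b x) : ℕ) - ((b : ℕ) + 1) := by
    intro x
    show (rightPerm p b hB (rightPerm p b hB x) : ℕ) = _
    rw [rightPerm_val]
    have e : pos2 b (rightPerm p b hB x) = p (pos2 b x) := by
      apply Fin.ext
      show (b : ℕ) + 1 + ((rightPerm p b hB x : ℕ)) = _
      rw [rightPerm_val]
      have := hb2 x
      omega
    rw [e, Equiv.Perm.mul_apply]
  have hb2' : ∀ x : Fin (n - ((b : ℕ) + 1)), (b : ℕ) < ((p * p) (pos2 b x) : ℕ) := by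
    intro x
    rw [Equiv.Perm.mul_apply]
    exact hB (p (pos2 b x)) (hb2 x)
  constructor
  · refine hp.1.of_embed _ (pos2 b) hmono (fun x y => ?_)
    rw [Fin.lt_def, Fin.lt_def, rightPerm_val, rightPerm_val]
    have h1 := hb2 x
    have h2 := hb2 y
    omega
  · refine hp.2.of_embed _ (pos2 b) hmono (fun x y => ?_)
    rw [Fin.lt_def, Fin.lt_def, key, key]
    have h1 := hb2' x
    have h2 := hb2' y
    omega

lemma SA_ds {i n : ℕ} (h : i + (n - i) = n) (L : Equiv.Perm (Fin i))
    (R : Equiv.Perm (Fin (n - i))) (hL : StronglyAvoids312 L) (hR : StronglyAvoids312 R) :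
    StronglyAvoids312 ((finCongr h).permCongr (permDirectSum L R)) := by
  constructor
  · exact avoids_permCongr h _ (avoids_ds hL.1 hR.1)
  · rw [permCongr_mul, ds_mul]
    exact avoids_permCongr h _ (avoids_ds hL.2 hR.2)

theorem strongly_avoiding_decomposition (n : ℕ) (hn : 1 ≤ n) :
    (∀ p : Equiv.Perm (Fin n), StronglyAvoids312 p →
      ∃! x : (i : ℕ) × Equiv.Perm (Fin i) × Equiv.Perm (Fin (n - i)),
        1 ≤ x.1 ∧ x.1 ≤ n ∧
        StronglyAvoids312 x.2.1 ∧ EndsInOne x.2.1 ∧ StronglyAvoids312 x.2.2 ∧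
        ∃ h : x.1 + (n - x.1) = n,
          (finCongr h).permCongr (permDirectSum x.2.1 x.2.2) = p) ∧
    Sav312 n = ∑ i ∈ Finset.Icc 1 n, B312 i * Sav312 (n - i) := by
  have hdec : ∀ p : Equiv.Perm (Fin n), StronglyAvoids312 p →
      ∃! x : (i : ℕ) × Equiv.Perm (Fin i) × Equiv.Perm (Fin (n - i)),
        1 ≤ x.1 ∧ x.1 ≤ n ∧
        StronglyAvoids312 x.2.1 ∧ EndsInOne x.2.1 ∧ StronglyAvoids312 x.2.2 ∧
        ∃ h : x.1 + (n - x.1) = n,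
          (finCongr h).permCongr (permDirectSum x.2.1 x.2.2) = p := by
    intro p hp
    obtain ⟨b, hb⟩ : ∃ b : Fin n, (p b : ℕ) = 0 :=
      ⟨p.symm ⟨0, hn⟩, by rw [Equiv.apply_symm_apply]⟩
    have hA : ∀ a : Fin n, (a : ℕ) ≤ (b : ℕ) → (p a : ℕ) ≤ (b : ℕ) := fun a ha =>
      blockA p hp.1 b hb a (Fin.le_def.2 ha)
    have hB : ∀ a : Fin n, (b : ℕ) < (a : ℕ) → (b : ℕ) < (p a : ℕ) := fun a ha =>
      blockB p hp.1 b hb a (Fin.lt_def.2 ha)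
    have hbn := b.isLt
    refine ⟨⟨(b : ℕ) + 1, leftPerm p b hA, rightPerm p b hB⟩,
      ⟨by show (1:ℕ) ≤ (b : ℕ) + 1; omega, by show (b : ℕ) + 1 ≤ n; omega,
        SA_left p hp b hA, ?_, SA_right p hp b hB,
        ⟨by show (b : ℕ) + 1 + (n - ((b : ℕ) + 1)) = n; omega, reconstruct p b hA hB (by omega)⟩⟩, ?_⟩
    · refine ⟨Nat.succ_pos _, ?_⟩
      rw [leftPerm_val]
      have hgen : ∀ z : Fin n, (z : ℕ) = (b : ℕ) → (p z : ℕ) = 0 := by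
        intro z hz
        rw [Fin.ext hz]
        exact hb
      exact hgen _ (show ((b : ℕ) + 1 - 1) = (b : ℕ) by omega)
    · rintro ⟨i', L', R'⟩ ⟨hi1, hi2, hL', hE', hR', hh, hrec⟩
      obtain ⟨hpos, hE⟩ := hE'
      have hi1' : 1 ≤ i' := hi1
      have hi2' : i' ≤ n := hi2
      have hval : ∀ z : Fin n, (p z : ℕ) = (permDirectSum L' R' (Fin.cast hh.symm z) : ℕ) := by
        intro z
        conv_lhs => rw [← hrec]
        rfl
      have hlt : ∀ z : Fin n, (hz : (z : ℕ) < i') → (p z : ℕ) = (L' ⟨(z : ℕ), hz⟩ : ℕ) := by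
        intro z hz
        rw [hval z, ds_apply_lt _ _ _ (show ((Fin.cast hh.symm z : Fin _) : ℕ) < i' from hz)]
        rfl
      have hge : ∀ z : Fin n, (hz : i' ≤ (z : ℕ)) →
          (p z : ℕ) = i' + (R' ⟨(z : ℕ) - i', by have := z.isLt; omega⟩ : ℕ) := by
        intro z hz
        rw [hval z, ds_apply_ge _ _ _ (show i' ≤ ((Fin.cast hh.symm z : Fin _) : ℕ) from hz)]
        rfl
      have h0 : (p ⟨i' - 1, by omega⟩ : ℕ) = 0 :=
        (hlt ⟨i' - 1, by omega⟩ (show i' - 1 < i' by omega)).trans hE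
      have hz0b : (⟨i' - 1, by omega⟩ : Fin n) = b :=
        p.injective (Fin.ext (by rw [h0, hb]))
      have hbv : (b : ℕ) = i' - 1 := congrArg Fin.val hz0b.symm
      have hieq : i' = (b : ℕ) + 1 := by omega
      subst hieq
      have hLeq : L' = leftPerm p b hA := by
        apply Equiv.ext
        intro x
        apply Fin.ext
        rw [leftPerm_val]
        have h1 := hlt (pos1 b x) (show (x : ℕ) < (b : ℕ) + 1 from x.isLt)
        exact (h1.symm : _)
      have hReq : R' = rightPerm p b hB := by
        apply Equiv.ext
        intro x
        apply Fin.ext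
        rw [rightPerm_val]
        have h1 := hge (pos2 b x) (show (b : ℕ) + 1 ≤ (b : ℕ) + 1 + (x : ℕ) by omega)
        have h4 : (R' (⟨((pos2 b x : Fin n) : ℕ) - ((b : ℕ) + 1),
            by have := x.isLt; have := b.isLt; omega⟩ : Fin (n - ((b : ℕ) + 1))) : ℕ)
            = (R' x : ℕ) := by
          have hgen : ∀ w : Fin (n - ((b : ℕ) + 1)), (w : ℕ) = (x : ℕ) →
              (R' w : ℕ) = (R' x : ℕ) := by
            intro w hw
            rw [Fin.ext hw]
          exact hgen _ (show ((b : ℕ) + 1 + (x : ℕ)) - ((b : ℕ) + 1) = (x : ℕ) by omega)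
        rw [h1, Nat.add_sub_cancel_left]
        exact h4.symm
      rw [hLeq, hReq]
  refine ⟨hdec, ?_⟩
  classical
  let T := {x : (i : ℕ) × Equiv.Perm (Fin i) × Equiv.Perm (Fin (n - i)) //
    1 ≤ x.1 ∧ x.1 ≤ n ∧ StronglyAvoids312 x.2.1 ∧ EndsInOne x.2.1 ∧ StronglyAvoids312 x.2.2}
  have hF : ∀ t : T, StronglyAvoids312
      ((finCongr (show t.1.1 + (n - t.1.1) = n by omega)).permCongr
        (permDirectSum t.1.2.1 t.1.2.2)) :=
    fun t => SA_ds _ _ _ t.2.2.2.1 t.2.2.2.2.2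
  let F : T → {p : Equiv.Perm (Fin n) // StronglyAvoids312 p} := fun t => ⟨_, hF t⟩
  have hbij : Function.Bijective F := by
    constructor
    · intro t t' het
      have hu := hdec (F t).1 (F t).2
      have h1 : 1 ≤ t.1.1 ∧ t.1.1 ≤ n ∧ StronglyAvoids312 t.1.2.1 ∧ EndsInOne t.1.2.1 ∧
          StronglyAvoids312 t.1.2.2 ∧ ∃ h : t.1.1 + (n - t.1.1) = n,
            (finCongr h).permCongr (permDirectSum t.1.2.1 t.1.2.2) = (F t).1 :=
        ⟨t.2.1, t.2.2.1, t.2.2.2.1, t.2.2.2.2.1, t.2.2.2.2.2, by omega, rfl⟩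
      have h2 : 1 ≤ t'.1.1 ∧ t'.1.1 ≤ n ∧ StronglyAvoids312 t'.1.2.1 ∧ EndsInOne t'.1.2.1 ∧
          StronglyAvoids312 t'.1.2.2 ∧ ∃ h : t'.1.1 + (n - t'.1.1) = n,
            (finCongr h).permCongr (permDirectSum t'.1.2.1 t'.1.2.2) = (F t).1 :=
        ⟨t'.2.1, t'.2.2.1, t'.2.2.2.1, t'.2.2.2.2.1, t'.2.2.2.2.2, by omega, by rw [het]⟩
      exact Subtype.ext (hu.unique h1 h2)
    · intro q
      obtain ⟨x, hx, -⟩ := hdec q.1 q.2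
      obtain ⟨ha1, ha2, ha3, ha4, ha5, hh, hrec⟩ := hx
      refine ⟨⟨x, ha1, ha2, ha3, ha4, ha5⟩, ?_⟩
      exact Subtype.ext hrec
  have e1 : Nat.card {p : Equiv.Perm (Fin n) // StronglyAvoids312 p} = Nat.card T :=
    (Nat.card_eq_of_bijective F hbij).symm
  let G : T ≃ Σ i : (Finset.Icc 1 n),
      ({L : Equiv.Perm (Fin (i : ℕ)) // StronglyAvoids312 L ∧ EndsInOne L} ×
        {R : Equiv.Perm (Fin (n - (i : ℕ))) // StronglyAvoids312 R}) :=
    { toFun := fun t => ⟨⟨t.1.1, Finset.mem_Icc.2 ⟨t.2.1, t.2.2.1⟩⟩,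
        ⟨⟨t.1.2.1, t.2.2.2.1, t.2.2.2.2.1⟩, ⟨t.1.2.2, t.2.2.2.2.2⟩⟩⟩,
      invFun := fun s => ⟨⟨(s.1 : ℕ), s.2.1.1, s.2.2.1⟩,
        (Finset.mem_Icc.1 s.1.2).1, (Finset.mem_Icc.1 s.1.2).2, s.2.1.2.1, s.2.1.2.2, s.2.2.2⟩,
      left_inv := fun t => rfl,
      right_inv := fun s => rfl }
  rw [show Sav312 n = Nat.card {p : Equiv.Perm (Fin n) // StronglyAvoids312 p} from rfl,
    e1, Nat.card_congr G]
  rw [Nat.card_eq_fintype_card, Fintype.card_sigma]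
  rw [← Finset.sum_coe_sort (Finset.Icc 1 n) (fun i => B312 i * Sav312 (n - i))]
  apply Finset.sum_congr rfl
  intro i _
  rw [Fintype.card_prod, B312, Sav312, Nat.card_eq_fintype_card, Nat.card_eq_fintype_card]
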